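/- If U is a nonprincipal ultrafilter on ω, then U regarded as a preorder under containment ⊇ is not cofinally equivalent to any coordinatewise product ∏_{μ∈S} μ where S is a set of infinite regular cardinals (including the empty product, i.e., the one-element order). Equivalently, no nonprincipal neighborhood filter in βω is cofinally scalene. -/

import Mathlib

/-!
A cofinal equivalence yields a Tukey map `U → ∏_{μ ∈ S} μ`: a set whose image is bounded is itself
bounded. Every countable subset of an uncountable regular cardinal is bounded, and at most one
factor, `ω`, is countable, so the product is a countable union of sets whose countable subsets are
bounded (slice it along the coordinate `ω`). Tukey maps pull this decomposition back to `U`.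
There, since `ℕ` is countable, a set whose countable subsets are bounded is itself bounded, so `U`
would have a countable base; but an ultrafilter finer than the cofinite filter on `ℕ` is never
countably generated.
-/

universe u v w

/-- Two preorders are *cofinally equivalent* if there is a preorder (given here by a
reflexive transitive relation `le` on `R`) such that both are order isomorphic to
cofinal subsets of it. -/
def CofEquiv (P : Type u) (Q : Type v) [Preorder P] [Preorder Q] : Prop :=
  ∃ (R : Type (max u v)) (le : R → R → Prop),
    Reflexive le ∧ Transitive le ∧
    ∃ (f : P → R) (g : Q → R),
      Function.Injective f ∧ Function.Injective g ∧
      (∀ a b : P, a ≤ b ↔ le (f a) (f b)) ∧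
      (∀ a b : Q, a ≤ b ↔ le (g a) (g b)) ∧
      (∀ r : R, ∃ a : P, le r (f a)) ∧
      (∀ r : R, ∃ b : Q, le r (g b))

/-- An ultrafilter on `ω` as a preorder under containment `⊇`. -/
def UOrd (U : Ultrafilter ℕ) := {s : Set ℕ // s ∈ U}

instance (U : Ultrafilter ℕ) : Preorder (UOrd U) where
  le s t := Subtype.val t ⊆ Subtype.val s
  le_refl _ := subset_rfl
  le_trans _ _ _ h1 h2 := Set.Subset.trans h2 h1

open Set Filter
open scoped Cardinal

section CountablyBounded

variable {P : Type u} {Q : Type v} [Preorder P] [Preorder Q]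

def IsCountablyBounded (A : Set P) : Prop :=
  ∀ X ⊆ A, X.Countable → BddAbove X

variable (P) in
def IsSigmaCountablyBounded : Prop :=
  ∃ 𝒱 : Set (Set P), 𝒱.Countable ∧ ⋃₀ 𝒱 = univ ∧ ∀ A ∈ 𝒱, IsCountablyBounded A

def IsTukeyMap (φ : P → Q) : Prop :=
  ∀ X : Set P, BddAbove (φ '' X) → BddAbove X

theorem CofEquiv.exists_isTukeyMap (h : CofEquiv P Q) : ∃ φ : P → Q, IsTukeyMap φ := by
  obtain ⟨R, le, -, htrans, f, g, -, -, hf, hg, hf_cof, hg_cof⟩ := h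
  choose φ hφ using fun p => hg_cof (f p)
  refine ⟨φ, fun X ⟨b, hb⟩ => ?_⟩
  obtain ⟨p₀, hp₀⟩ := hf_cof (g b)
  refine ⟨p₀, fun p hp => (hf p p₀).2 (htrans (htrans (hφ p) ?_) hp₀)⟩
  exact (hg _ _).1 (hb (mem_image_of_mem φ hp))

theorem IsTukeyMap.isCountablyBounded_preimage {φ : P → Q} (hφ : IsTukeyMap φ) {A : Set Q}
    (hA : IsCountablyBounded A) : IsCountablyBounded (φ ⁻¹' A) := fun X hXA hX =>
  hφ X (hA _ (image_subset_iff.2 hXA) (hX.image φ))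

theorem IsTukeyMap.isSigmaCountablyBounded {φ : P → Q} (hφ : IsTukeyMap φ)
    (hQ : IsSigmaCountablyBounded Q) : IsSigmaCountablyBounded P := by
  obtain ⟨𝒱, h𝒱, hcover, hbdd⟩ := hQ
  refine ⟨preimage φ '' 𝒱, h𝒱.image _, ?_, ?_⟩
  · rw [sUnion_image, ← preimage_sUnion, hcover, preimage_univ]
  · rintro _ ⟨A, hA, rfl⟩
    exact hφ.isCountablyBounded_preimage (hbdd A hA)

theorem isSigmaCountablyBounded_of_isCountablyBounded_univ
    (h : IsCountablyBounded (univ : Set P)) : IsSigmaCountablyBounded P :=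
  ⟨{univ}, countable_singleton _, sUnion_singleton _, fun _ hA => hA ▸ h⟩

theorem isSigmaCountablyBounded_of_countable [Countable P] : IsSigmaCountablyBounded P := by
  refine ⟨range fun p : P => {p}, countable_range _, ?_, ?_⟩
  · exact sUnion_eq_univ_iff.2 fun p => ⟨{p}, mem_range_self p, rfl⟩
  · rintro _ ⟨p, rfl⟩ X hX -
    exact bddAbove_singleton.mono hX

theorem isCountablyBounded_univ_of_aleph0_lt_cof {α : Type u} [LinearOrder α]
    (h : ℵ₀ < Order.cof α) : IsCountablyBounded (univ : Set α) := fun _ _ hX =>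
  BddAbove.of_not_isCofinal fun hcof =>
    ((Order.cof_le hcof).trans (Cardinal.mk_le_aleph0_iff.2 hX.to_subtype)).not_gt h

end CountablyBounded

theorem isSigmaCountablyBounded_pi {ι : Type u} {α : ι → Type v} [∀ i, Preorder (α i)]
    (h : ∀ i, IsSigmaCountablyBounded (α i))
    (hsub : {i | ¬ IsCountablyBounded (univ : Set (α i))}.Subsingleton) :
    IsSigmaCountablyBounded (∀ i, α i) := by
  rcases hsub.eq_empty_or_singleton with hnone | ⟨i₀, hi₀⟩
  · refine isSigmaCountablyBounded_of_isCountablyBounded_univ fun X _ hX => ?_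
    refine bddAbove_pi.2 fun i => ?_
    have hi : IsCountablyBounded (univ : Set (α i)) :=
      of_not_not fun hi => (hnone.le hi : i ∈ (∅ : Set ι))
    exact hi _ (subset_univ _) (hX.image _)
  · obtain ⟨𝒱, h𝒱, hcover, hbdd⟩ := h i₀
    refine ⟨preimage (Function.eval i₀) '' 𝒱, h𝒱.image _, ?_, ?_⟩
    · rw [sUnion_image, ← preimage_sUnion, hcover, preimage_univ]
    · rintro _ ⟨A, hA, rfl⟩ X hXA hX
      refine bddAbove_pi.2 fun i => ?_
      by_cases hi : i = i₀
      · subst hi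
        exact hbdd A hA _ (image_subset_iff.2 hXA) (hX.image _)
      · have hi' : IsCountablyBounded (univ : Set (α i)) :=
          of_not_not fun hi' => hi (hi₀.le hi')
        exact hi' _ (subset_univ _) (hX.image _)

namespace Cardinal.IsRegular

variable {μ : Cardinal.{u}}

theorem isCountablyBounded_univ_toType (hμ : μ.IsRegular) (h : μ ≠ ℵ₀) :
    IsCountablyBounded (Set.univ : Set μ.ord.ToType) := by
  refine isCountablyBounded_univ_of_aleph0_lt_cof ?_
  rw [Ordinal.cof_toType, hμ.cof_ord]
  exact hμ.aleph0_le.lt_of_ne' h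

theorem isSigmaCountablyBounded_toType (hμ : μ.IsRegular) :
    IsSigmaCountablyBounded μ.ord.ToType := by
  by_cases h : μ = ℵ₀
  · have : Countable μ.ord.ToType := by
      rw [← Cardinal.mk_le_aleph0_iff, Cardinal.mk_toType, Cardinal.card_ord, h]
    exact isSigmaCountablyBounded_of_countable
  · exact isSigmaCountablyBounded_of_isCountablyBounded_univ (hμ.isCountablyBounded_univ_toType h)

end Cardinal.IsRegular

theorem Ultrafilter.not_tendsto_of_injective {α : Type u} (U : Ultrafilter α) {a : ℕ → α}
    (ha : a.Injective) : ¬ Tendsto a atTop U := by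
  intro hlim
  set E := range fun i => a (2 * i)
  rcases U.mem_or_compl_mem E with hE | hE
  · obtain ⟨N, hN⟩ := eventually_atTop.1 (hlim hE)
    obtain ⟨i, hi⟩ := hN (2 * N + 1) (by omega)
    have := ha hi
    omega
  · obtain ⟨N, hN⟩ := eventually_atTop.1 (hlim hE)
    exact hN (2 * N) (by omega) ⟨N, rfl⟩

theorem Ultrafilter.not_isCountablyGenerated_of_le_atTop {α : Type u} [LinearOrder α]
    [NoMaxOrder α] (U : Ultrafilter α) (hU : (U : Filter α) ≤ atTop) :
    ¬ (U : Filter α).IsCountablyGenerated := by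
  intro
  obtain ⟨a, ha⟩ := exists_seq_tendsto (U : Filter α)
  obtain ⟨φ, hφ, haφ⟩ := strictMono_subseq_of_tendsto_atTop (ha.mono_right hU)
  exact U.not_tendsto_of_injective haφ.injective (ha.comp hφ.tendsto_atTop)

namespace UOrd

variable {U : Ultrafilter ℕ}

/-- For each point `k` missed by some member of `A`, pick one such member; a bound `t` of these
countably many witnesses lies below every member of `A`. -/
theorem bddAbove_of_isCountablyBounded {A : Set (UOrd U)} (hA : IsCountablyBounded A) :
    BddAbove A := by
  have hwitness : ∀ k : ℕ, ∃ w : UOrd U, (∃ v ∈ A, k ∉ v.1) → w ∈ A ∧ k ∉ w.1 := by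
    intro k
    by_cases hk : ∃ v ∈ A, k ∉ v.1
    · obtain ⟨v, hv, hkv⟩ := hk
      exact ⟨v, fun _ => ⟨hv, hkv⟩⟩
    · exact ⟨⟨univ, univ_mem⟩, fun h => absurd h hk⟩
  choose w hw using hwitness
  obtain ⟨t, ht⟩ :=
    hA (range w ∩ A) inter_subset_right ((countable_range w).mono inter_subset_left)
  refine ⟨t, fun v hv k hkt => ?_⟩
  by_contra hkv
  obtain ⟨hwA, hwk⟩ := hw k ⟨v, hv, hkv⟩
  exact hwk (ht ⟨mem_range_self k, hwA⟩ hkt)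

theorem isCountablyGenerated_of_isSigmaCountablyBounded (h : IsSigmaCountablyBounded (UOrd U)) :
    (U : Filter ℕ).IsCountablyGenerated := by
  obtain ⟨𝒱, h𝒱, hcover, hbdd⟩ := h
  have : Countable 𝒱 := h𝒱.to_subtype
  choose t ht using fun A : 𝒱 => bddAbove_of_isCountablyBounded (hbdd A A.2)
  refine HasBasis.isCountablyGenerated (p := fun _ => True) (s := fun A => (t A).1)
    ⟨fun s => ⟨fun hs => ?_, fun ⟨A, _, hA⟩ => mem_of_superset (t A).2 hA⟩⟩
  obtain ⟨A, hA, hsA⟩ := sUnion_eq_univ_iff.1 hcover ⟨s, hs⟩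
  exact ⟨⟨A, hA⟩, trivial, ht ⟨A, hA⟩ hsA⟩

end UOrd

/-- No nonprincipal ultrafilter on `ω` (equivalently, no nonprincipal
neighborhood filter in `βω`), ordered by `⊇`, is cofinally equivalent to a
coordinatewise product `∏_{μ ∈ S} μ` of a set `S` of infinite regular cardinals
(the empty product, a one-element order, included); i.e. none is cofinally scalene. -/
theorem nonprincipal_ultrafilter_not_cofinally_scalene (U : Ultrafilter ℕ)
    (hU : ∀ s : Set ℕ, sᶜ.Finite → s ∈ U)
    (S : Set Cardinal.{0}) (hS : ∀ μ ∈ S, μ.IsRegular) :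
    ¬ CofEquiv (UOrd U) (∀ μ : S, (μ : Cardinal).ord.ToType) := by
  intro hcof
  obtain ⟨φ, hφ⟩ := hcof.exists_isTukeyMap
  have hω : ∀ μ : S, ¬ IsCountablyBounded (Set.univ : Set (μ : Cardinal).ord.ToType) →
      (μ : Cardinal) = ℵ₀ := fun μ hμ =>
    by_contra fun h => hμ ((hS μ μ.2).isCountablyBounded_univ_toType h)
  have hprod : IsSigmaCountablyBounded (∀ μ : S, (μ : Cardinal).ord.ToType) :=
    isSigmaCountablyBounded_pi (fun μ => (hS μ μ.2).isSigmaCountablyBounded_toType)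
      fun μ hμ ν hν => Subtype.ext ((hω μ hμ).trans (hω ν hν).symm)
  have hU_atTop : (U : Filter ℕ) ≤ atTop := Nat.cofinite_eq_atTop ▸ fun s hs => hU s hs
  exact U.not_isCountablyGenerated_of_le_atTop hU_atTop
    (UOrd.isCountablyGenerated_of_isSigmaCountablyBounded (hφ.isSigmaCountablyBounded hprod))
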